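/- arXiv:1103.5609 — 6 statements merged into one kernel-verified Lean document; each statement's English description precedes it below -/
import Mathlib

section
/- If a random permutation of the vertices of a finite simple graph G is chosen uniformly at random, and S is the set of vertices that appear before all of their neighbors in the permutation, then S is an independent set and the expected size of S equals the sum over all vertices v of 1/(d(v)+1). -/
open Finset

private lemma swap_cond {V : Type*} [Fintype V] [DecidableEq V]
    (T : Finset V) {u v : V} (hu : u ∈ T)
    (σ : V ≃ Fin (Fintype.card V))
    (h : ∀ w ∈ T, w ≠ v → σ v < σ w) :
    ∀ w ∈ T, w ≠ u → ((Equiv.swap u v).trans σ) u < ((Equiv.swap u v).trans σ) w := by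
  by_cases huv : u = v
  · subst huv; simpa using h
  intro w hw hwu
  have hsu : ((Equiv.swap u v).trans σ) u = σ v := by simp
  rw [hsu]
  by_cases hwv : w = v
  · have : ((Equiv.swap u v).trans σ) w = σ u := by simp [hwv]
    rw [this]
    exact h u hu huv
  · have : ((Equiv.swap u v).trans σ) w = σ w := by
      simp [Equiv.swap_apply_of_ne_of_ne hwu hwv]
    rw [this]
    exact h w hw hwv

private lemma count_firstLayer {V : Type*} [Fintype V] [DecidableEq V]
    (G : SimpleGraph V) [DecidableRel G.Adj] (v : V) :
    Fintype.card (V ≃ Fin (Fintype.card V)) =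
      (G.degree v + 1) *
        (univ.filter (fun σ : V ≃ Fin (Fintype.card V) =>
          ∀ w ∈ G.neighborFinset v, σ v < σ w)).card := by
  classical
  set T : Finset V := insert v (G.neighborFinset v) with hT
  have hvT : v ∈ T := mem_insert_self _ _
  set c : V → ℕ := fun u => (univ.filter (fun σ : V ≃ Fin (Fintype.card V) =>
      ∀ w ∈ T, w ≠ u → σ u < σ w)).card with hc
  -- the target filter equals c v
  have hcv : (univ.filter (fun σ : V ≃ Fin (Fintype.card V) =>
      ∀ w ∈ G.neighborFinset v, σ v < σ w)).card = c v := by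
    congr 1
    apply filter_congr
    intro σ _
    simp only [hT, mem_insert, eq_iff_iff]
    constructor
    · rintro h w (rfl | hw) hwv
      · exact absurd rfl hwv
      · exact h w hw
    · intro h w hw
      exact h w (Or.inr hw) (G.ne_of_adj (G.adj_symm ((SimpleGraph.mem_neighborFinset G v w).mp hw)))
  -- all c u for u ∈ T are equal to c v
  have hceq : ∀ u ∈ T, c u = c v := by
    intro u hu
    simp only [hc]
    apply Finset.card_bij' (fun σ _ => (Equiv.swap v u).trans σ)
      (fun σ _ => (Equiv.swap u v).trans σ)
    · intro σ hσ
      simp only [mem_filter, mem_univ, true_and] at hσ ⊢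
      exact swap_cond T hvT σ hσ
    · intro σ hσ
      simp only [mem_filter, mem_univ, true_and] at hσ ⊢
      exact swap_cond T hu σ hσ
    · intro σ _
      ext x
      simp [Equiv.swap_comm v u]
    · intro σ _
      ext x
      simp [Equiv.swap_comm v u]
  -- the filters partition all permutations
  have hTne : T.Nonempty := ⟨v, hvT⟩
  have hpart : Fintype.card (V ≃ Fin (Fintype.card V)) = ∑ u ∈ T, c u := by
    rw [← Finset.card_univ]
    set g : (V ≃ Fin (Fintype.card V)) → V :=
      fun σ => σ.symm ((T.image (fun x => σ x)).min' (hTne.image _)) with hg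
    have hgmem : ∀ σ, g σ ∈ T := by
      intro σ
      have := Finset.min'_mem (T.image (fun x => σ x)) (hTne.image _)
      obtain ⟨w, hw, hweq⟩ := Finset.mem_image.mp this
      simpa [hg, ← hweq] using hw
    have hgmin : ∀ σ : V ≃ Fin (Fintype.card V), ∀ w ∈ T, σ (g σ) ≤ σ w := by
      intro σ w hw
      have h1 : σ (g σ) = (T.image (fun x => σ x)).min' (hTne.image _) := by simp [hg]
      rw [h1]
      exact Finset.min'_le _ _ (Finset.mem_image_of_mem _ hw)
    rw [Finset.card_eq_sum_card_fiberwise (f := g) (fun σ _ => hgmem σ)]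
    apply Finset.sum_congr rfl
    intro u hu
    congr 1
    apply filter_congr
    intro σ _
    constructor
    · rintro rfl w hw hwg
      exact lt_of_le_of_ne (hgmin σ w hw) (fun h => hwg (σ.injective h.symm))
    · intro h
      by_contra hne
      exact absurd (hgmin σ u hu) (not_le.mpr (h (g σ) (hgmem σ) hne))
  have hTcard : T.card = G.degree v + 1 := by
    rw [hT, Finset.card_insert_of_notMem (by simp), SimpleGraph.card_neighborFinset_eq_degree]
  rw [hcv, hpart, Finset.sum_congr rfl hceq, Finset.sum_const, hTcard, smul_eq_mul]

/-- Taking a uniformly random bijective ordering of the vertices, the set `S` of vertices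
appearing before all of their neighbors is an independent set, and its expected size
equals `∑_v 1/(d(v)+1)`. -/
theorem firstLayer_indep_and_expected_size {V : Type*} [Fintype V] [DecidableEq V]
    (G : SimpleGraph V) [DecidableRel G.Adj] :
    (∀ σ : V ≃ Fin (Fintype.card V), ∀ u ∈ univ.filter
        (fun v => ∀ w ∈ G.neighborFinset v, σ v < σ w),
      ∀ w ∈ univ.filter (fun v => ∀ w ∈ G.neighborFinset v, σ v < σ w), ¬ G.Adj u w) ∧
    (∑ σ : V ≃ Fin (Fintype.card V),
        ((univ.filter (fun v => ∀ w ∈ G.neighborFinset v, σ v < σ w)).card : ℝ))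
      / (Fintype.card (V ≃ Fin (Fintype.card V)) : ℝ)
      = ∑ v : V, 1 / ((G.degree v : ℝ) + 1) := by
  classical
  have hN : (0:ℝ) < (Fintype.card (V ≃ Fin (Fintype.card V)) : ℝ) := by
    have : Nonempty (V ≃ Fin (Fintype.card V)) := ⟨Fintype.equivFin V⟩
    exact_mod_cast Fintype.card_pos
  constructor
  · intro σ u hu w hw hadj
    simp only [mem_filter, mem_univ, true_and] at hu hw
    exact lt_asymm (hu w ((SimpleGraph.mem_neighborFinset G u w).mpr hadj))
      (hw u ((SimpleGraph.mem_neighborFinset G w u).mpr hadj.symm))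
  · rw [div_eq_iff (ne_of_gt hN)]
    have key : ∀ v : V, ((univ.filter (fun σ : V ≃ Fin (Fintype.card V) =>
        ∀ w ∈ G.neighborFinset v, σ v < σ w)).card : ℝ)
        = 1 / ((G.degree v : ℝ) + 1) * (Fintype.card (V ≃ Fin (Fintype.card V)) : ℝ) := by
      intro v
      have h := count_firstLayer G v
      have hd : ((G.degree v : ℝ) + 1) ≠ 0 := by positivity
      rw [one_div, inv_mul_eq_div, eq_div_iff hd, mul_comm]
      exact_mod_cast h.symm
    have step1 : (∑ σ : V ≃ Fin (Fintype.card V),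
        ((univ.filter (fun v => ∀ w ∈ G.neighborFinset v, σ v < σ w)).card : ℝ))
        = ∑ v : V, ((univ.filter (fun σ : V ≃ Fin (Fintype.card V) =>
            ∀ w ∈ G.neighborFinset v, σ v < σ w)).card : ℝ) := by
      simp only [Finset.card_filter]
      push_cast
      rw [Finset.sum_comm]
    rw [step1, Finset.sum_congr rfl (fun v _ => key v), ← Finset.sum_mul]
end

section
/- Let G be a finite simple graph, π a permutation of its vertices, and G_2 the subgraph induced on the vertices having at most 1 neighbor preceding them in π. Then G_2 is a forest. -/
/-!
The vertex of a cycle that comes last in the ordering has two distinct neighbours on the cycle,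
and both precede it; so a graph in which no vertex has two preceding neighbours has no cycle.
-/

namespace SimpleGraph

theorem isAcyclic_of_injective_of_subsingleton_adj_lt {V α : Type*} [LinearOrder α]
    {G : SimpleGraph V} (f : V → α) (hf : Function.Injective f)
    (h : ∀ v, {w | G.Adj v w ∧ f w < f v}.Subsingleton) : G.IsAcyclic := by
  classical
  intro v p hp
  obtain ⟨u, hu, hmax⟩ := p.support.toFinset.exists_max_image f ⟨v, by simp⟩
  rw [List.mem_toFinset] at hu
  obtain ⟨a, b, hab, hnbrs⟩ := Set.ncard_eq_two.mp (hp.ncard_neighborSet_toSubgraph_eq_two hu)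
  have lower : p.toSubgraph.neighborSet u ⊆ {w | G.Adj u w ∧ f w < f u} := fun w hw =>
    have hw_mem : w ∈ p.support.toFinset :=
      List.mem_toFinset.mpr (p.mem_verts_toSubgraph.mp hw.snd_mem)
    ⟨p.toSubgraph.adj_sub hw, (hmax w hw_mem).lt_of_ne (hf.ne (p.toSubgraph.adj_sub hw).ne.symm)⟩
  exact hab (h u (lower (by simp [hnbrs])) (lower (by simp [hnbrs])))

end SimpleGraph

theorem G2_isAcyclic_general {V : Type*} [Fintype V]
    (G : SimpleGraph V) [DecidableRel G.Adj] (σ : V ≃ Fin (Fintype.card V)) :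
    (G.induce {v : V | ((G.neighborFinset v).filter (fun w => σ w < σ v)).card ≤ 1}).IsAcyclic := by
  refine SimpleGraph.isAcyclic_of_injective_of_subsingleton_adj_lt (fun v => σ v)
    (σ.injective.comp Subtype.val_injective) fun v w₁ hw₁ w₂ hw₂ => Subtype.ext ?_
  have lower_mem {w : V} (hadj : G.Adj v w) (hlt : σ w < σ v) :
      w ∈ (G.neighborFinset v).filter (fun w => σ w < σ v) :=
    Finset.mem_filter.mpr ⟨(G.mem_neighborFinset _ _).mpr hadj, hlt⟩
  exact Finset.card_le_one.mp v.2 _ (lower_mem hw₁.1 hw₁.2) _ (lower_mem hw₂.1 hw₂.2)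

/-- For any ordering `σ` of the vertices, the subgraph `G_2` induced on the vertices
with at most one neighbor preceding them is a forest (acyclic). -/
theorem G2_isAcyclic {V : Type*} [Fintype V] [DecidableEq V]
    (G : SimpleGraph V) [DecidableRel G.Adj] (σ : V ≃ Fin (Fintype.card V)) :
    (G.induce {v : V | ((G.neighborFinset v).filter (fun w => σ w < σ v)).card ≤ 1}).IsAcyclic :=
  G2_isAcyclic_general G σ
end

section
/- Let G be a finite simple graph and I an independent set in G. Let π be a uniformly random permutation of the vertices and G_3 the subgraph induced on vertices with at most 2 neighbors preceding them in π. If every vertex of G has degree at least 2, then the expected number of vertices of I contained in G_3 equals the sum over v in I of 3/(d(v)+1). -/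
open Finset

lemma rank_ssubset {α : Type*} [LinearOrder α] [DecidableEq α] (T : Finset α)
    {a b : α} (ha : a ∈ T) (h : a < b) :
    T.filter (· < a) ⊂ T.filter (· < b) := by
  refine Finset.ssubset_iff_of_subset ?_ |>.mpr ?_
  · intro x hx
    rw [Finset.mem_filter] at hx ⊢
    exact ⟨hx.1, lt_trans hx.2 h⟩
  · exact ⟨a, Finset.mem_filter.mpr ⟨ha, h⟩,
      fun hc => absurd (Finset.mem_filter.mp hc).2 (lt_irrefl a)⟩

/-- The number of elements of a finset (of size ≥ 3) having at most 2 smaller elements is 3. -/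
lemma filter_rank_le_two {α : Type*} [LinearOrder α] [DecidableEq α] (T : Finset α)
    (h3 : 3 ≤ T.card) :
    (T.filter (fun t => (T.filter (· < t)).card ≤ 2)).card = 3 := by
  have hinj : Set.InjOn (fun t => (T.filter (· < t)).card) T := by
    intro a ha b hb hab
    by_contra hne
    rcases lt_or_gt_of_ne hne with h | h
    · exact absurd hab (Nat.ne_of_lt (Finset.card_lt_card (rank_ssubset T ha h)))
    · exact absurd hab.symm (Nat.ne_of_lt (Finset.card_lt_card (rank_ssubset T hb h)))
  have himg : T.image (fun t => (T.filter (· < t)).card) = Finset.range T.card := by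
    apply Finset.eq_of_subset_of_card_le
    · intro k hk
      rcases Finset.mem_image.mp hk with ⟨t, ht, rfl⟩
      refine Finset.mem_range.mpr (Finset.card_lt_card ?_)
      exact Finset.ssubset_iff_of_subset (Finset.filter_subset _ _) |>.mpr
        ⟨t, ht, fun hc => absurd (Finset.mem_filter.mp hc).2 (lt_irrefl t)⟩
    · rw [Finset.card_range, Finset.card_image_of_injOn hinj]
  calc (T.filter (fun t => (T.filter (· < t)).card ≤ 2)).card
      = ((T.filter (fun t => (T.filter (· < t)).card ≤ 2)).image
          (fun t => (T.filter (· < t)).card)).card :=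
        (Finset.card_image_of_injOn (hinj.mono (Finset.filter_subset _ _))).symm
    _ = ((T.image (fun t => (T.filter (· < t)).card)).filter (· ≤ 2)).card := by
        rw [Finset.filter_image]
    _ = ((Finset.range T.card).filter (· ≤ 2)).card := by rw [himg]
    _ = 3 := by
        have : (Finset.range T.card).filter (· ≤ 2) = Finset.range 3 := by
          ext k; simp only [Finset.mem_filter, Finset.mem_range]
          omega
        rw [this, Finset.card_range]

/-- Summing `F (g a)` over all permutations `g`. -/
lemma sum_perm_apply {α : Type*} [Fintype α] [DecidableEq α] (a : α) (F : α → ℕ) :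
    ∑ g : Equiv.Perm α, F (g a) = (Fintype.card α - 1).factorial * ∑ b : α, F b := by
  obtain ⟨n, hn⟩ : ∃ n, Fintype.card α = n + 1 :=
    ⟨Fintype.card α - 1, (Nat.succ_pred_eq_of_pos (Fintype.card_pos_iff.mpr ⟨a⟩)).symm⟩
  have e0 : α ≃ Fin (n + 1) := Fintype.equivFinOfCardEq hn
  set e : α ≃ Fin (n + 1) := e0.trans (Equiv.swap 0 (e0 a)) with he
  have hea : e a = 0 := by simp [he, Equiv.swap_apply_right]
  have hsa : e.symm 0 = a := by rw [← hea, Equiv.symm_apply_apply]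
  have step1 : ∑ g : Equiv.Perm α, F (g a)
      = ∑ h : Equiv.Perm (Fin (n + 1)), F (e.symm (h 0)) := by
    refine Fintype.sum_equiv e.permCongr _ _ ?_
    intro g
    simp [Equiv.permCongr_apply, hsa]
  have step2 : ∑ h : Equiv.Perm (Fin (n + 1)), F (e.symm (h 0))
      = ∑ p : Fin (n + 1) × Equiv.Perm (Fin n), F (e.symm p.1) := by
    refine (Fintype.sum_equiv Equiv.Perm.decomposeFin.symm _ _ ?_).symm
    intro p
    rw [show (Equiv.Perm.decomposeFin.symm p) 0 = p.1 from
      Equiv.Perm.decomposeFin_symm_apply_zero p.1 p.2]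
  rw [step1, step2, Fintype.sum_prod_type]
  have : ∀ p : Fin (n + 1), ∑ _ : Equiv.Perm (Fin n), F (e.symm p) = n.factorial * F (e.symm p) := by
    intro p
    rw [Finset.sum_const, Finset.card_univ, Fintype.card_perm, Fintype.card_fin, smul_eq_mul]
  rw [Finset.sum_congr rfl (fun p _ => this p), ← Finset.mul_sum]
  congr 1
  · rw [hn, Nat.add_sub_cancel]
  · exact Fintype.sum_equiv e.symm _ _ (fun p => rfl)

section
variable {V : Type*} [Fintype V] [DecidableEq V]
  (G : SimpleGraph V) [DecidableRel G.Adj]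

lemma inner_count (v : V) (hdeg : 2 ≤ G.degree v)
    (σ : V ≃ Fin (Fintype.card V)) :
    ∑ g : Equiv.Perm {x // x ∈ insert v (G.neighborFinset v)},
      (if ((G.neighborFinset v).filter
          (fun w => σ ((Equiv.Perm.ofSubtype g) w) < σ ((Equiv.Perm.ofSubtype g) v))).card ≤ 2
        then 1 else 0)
      = 3 * (G.degree v).factorial := by
  classical
  set S : Finset V := insert v (G.neighborFinset v) with hSdef
  have hnb : v ∉ G.neighborFinset v := G.notMem_neighborFinset_self v
  have hvS : v ∈ S := Finset.mem_insert_self _ _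
  have hScard : S.card = G.degree v + 1 := by
    rw [hSdef, Finset.card_insert_of_notMem hnb]; rfl
  have hSc : Fintype.card {x // x ∈ S} = G.degree v + 1 := by
    rw [Fintype.card_coe, hScard]
  have herase : S.erase v = G.neighborFinset v := Finset.erase_insert hnb
  -- B1: rewrite each summand as a function of g ⟨v, hvS⟩
  have B1 : ∀ g : Equiv.Perm {x // x ∈ S},
      ((G.neighborFinset v).filter
          (fun w => σ ((Equiv.Perm.ofSubtype g) w) < σ ((Equiv.Perm.ofSubtype g) v))).card
      = ((S.erase ((g ⟨v, hvS⟩ : {x // x ∈ S}) : V)).filter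
          (fun u => σ u < σ ((g ⟨v, hvS⟩ : {x // x ∈ S}) : V))).card := by
    intro g
    set u₀ : V := ((g ⟨v, hvS⟩ : {x // x ∈ S}) : V) with hu₀
    have hgv : (Equiv.Perm.ofSubtype g) v = u₀ := Equiv.Perm.ofSubtype_apply_of_mem g hvS
    refine Finset.card_bij (fun w _ => (Equiv.Perm.ofSubtype g) w) ?_ ?_ ?_
    · intro w hw'
      have hw := Finset.mem_filter.mp hw'
      have hwS : w ∈ S := Finset.mem_insert_of_mem hw.1
      have hgw : (Equiv.Perm.ofSubtype g) w = ((g ⟨w, hwS⟩ : {x // x ∈ S}) : V) :=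
        Equiv.Perm.ofSubtype_apply_of_mem g hwS
      have h1 : (Equiv.Perm.ofSubtype g) w ≠ u₀ := by
        intro hEq
        have hwv : w = v := (Equiv.Perm.ofSubtype g).injective (hEq.trans hgv.symm)
        rw [hwv] at hw
        exact hnb hw.1
      have h2 : (Equiv.Perm.ofSubtype g) w ∈ S := by rw [hgw]; exact (g ⟨w, hwS⟩).2
      have h3 : σ ((Equiv.Perm.ofSubtype g) w) < σ u₀ := by rw [← hgv]; exact hw.2
      exact Finset.mem_filter.mpr ⟨Finset.mem_erase.mpr ⟨h1, h2⟩, h3⟩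
    · intro a _ b _ hab
      exact (Equiv.Perm.ofSubtype g).injective hab
    · intro u hu
      have hu' := Finset.mem_filter.mp hu
      obtain ⟨hune, huS⟩ := Finset.mem_erase.mp hu'.1
      have hult := hu'.2
      have hwS : ((g.symm ⟨u, huS⟩ : {x // x ∈ S}) : V) ∈ S := (g.symm ⟨u, huS⟩).2
      have hgw : (Equiv.Perm.ofSubtype g) ((g.symm ⟨u, huS⟩ : {x // x ∈ S}) : V) = u := by
        rw [Equiv.Perm.ofSubtype_apply_of_mem g hwS]
        simp
      have hwne : ((g.symm ⟨u, huS⟩ : {x // x ∈ S}) : V) ≠ v := by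
        intro hEq
        apply hune
        rw [← hgw, hEq, hgv]
      have hmem : ((g.symm ⟨u, huS⟩ : {x // x ∈ S}) : V) ∈
          (G.neighborFinset v).filter
            (fun w => σ ((Equiv.Perm.ofSubtype g) w) < σ ((Equiv.Perm.ofSubtype g) v)) := by
        rw [Finset.mem_filter]
        constructor
        · rw [← herase, Finset.mem_erase]; exact ⟨hwne, hwS⟩
        · rw [hgw, hgv]; exact hult
      exact ⟨_, hmem, hgw⟩
  have hsum : ∑ g : Equiv.Perm {x // x ∈ S},
      (if ((G.neighborFinset v).filter
          (fun w => σ ((Equiv.Perm.ofSubtype g) w) < σ ((Equiv.Perm.ofSubtype g) v))).card ≤ 2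
        then 1 else 0)
      = ∑ g : Equiv.Perm {x // x ∈ S},
          (fun u : {x // x ∈ S} =>
            if ((S.erase (u : V)).filter (fun w => σ w < σ (u : V))).card ≤ 2 then 1 else 0)
          (g ⟨v, hvS⟩) := by
    refine Finset.sum_congr rfl (fun g _ => ?_)
    rw [B1 g]
  have hP := sum_perm_apply (⟨v, hvS⟩ : {x // x ∈ S})
    (fun u : {x // x ∈ S} =>
      if ((S.erase (u : V)).filter (fun w => σ w < σ (u : V))).card ≤ 2 then 1 else 0)
  rw [hsum, hP, hSc]
  simp only [Nat.add_sub_cancel]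
  -- now compute ∑ u : S, indicator
  have hF : ∑ u : {x // x ∈ S},
      (if ((S.erase (u : V)).filter (fun w => σ w < σ (u : V))).card ≤ 2 then 1 else 0)
      = (S.filter (fun u => ((S.erase u).filter (fun w => σ w < σ u)).card ≤ 2)).card := by
    rw [Finset.sum_coe_sort S
      (fun u => if ((S.erase u).filter (fun w => σ w < σ u)).card ≤ 2 then 1 else 0)]
    exact Finset.sum_boole _ _
  rw [hF]
  -- erase doesn't matter in the rank
  have hrank : ∀ u ∈ S, ((S.erase u).filter (fun w => σ w < σ u)).card
      = (((S.image σ)).filter (fun t => t < σ u)).card := by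
    intro u hu
    have h1 : (S.erase u).filter (fun w => σ w < σ u) = S.filter (fun w => σ w < σ u) := by
      rw [Finset.filter_erase]
      apply Finset.erase_eq_of_notMem
      intro hc
      exact absurd (Finset.mem_filter.mp hc).2 (lt_irrefl _)
    rw [h1, Finset.filter_image]
    rw [Finset.card_image_of_injOn (σ.injective.injOn)]
  have hfilt : S.filter (fun u => ((S.erase u).filter (fun w => σ w < σ u)).card ≤ 2)
      = S.filter (fun u => ((S.image σ).filter (fun t => t < σ u)).card ≤ 2) := by
    apply Finset.filter_congr
    intro u hu
    rw [hrank u hu]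
  rw [hfilt]
  have hcard2 : (S.filter (fun u => ((S.image σ).filter (fun t => t < σ u)).card ≤ 2)).card
      = ((S.image σ).filter (fun t => ((S.image σ).filter (· < t)).card ≤ 2)).card := by
    rw [Finset.filter_image]
    rw [Finset.card_image_of_injOn (σ.injective.injOn)]
  rw [hcard2, filter_rank_le_two]
  · exact Nat.mul_comm _ _
  · rw [Finset.card_image_of_injOn (σ.injective.injOn), hScard]
    omega
end

section
variable {V : Type*} [Fintype V] [DecidableEq V]

lemma vertex_count (G : SimpleGraph V) [DecidableRel G.Adj] (v : V) (hdeg : 2 ≤ G.degree v) :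
    (Finset.univ.filter (fun σ : V ≃ Fin (Fintype.card V) =>
        ((G.neighborFinset v).filter (fun w => σ w < σ v)).card ≤ 2)).card * (G.degree v + 1)
      = 3 * Fintype.card (V ≃ Fin (Fintype.card V)) := by
  classical
  set n := Fintype.card V
  set S : Finset V := insert v (G.neighborFinset v) with hSdef
  have hnb : v ∉ G.neighborFinset v := G.notMem_neighborFinset_self v
  have hvS : v ∈ S := Finset.mem_insert_self _ _
  have hScard : S.card = G.degree v + 1 := by
    rw [hSdef, Finset.card_insert_of_notMem hnb]; rfl
  have hSc : Fintype.card {x // x ∈ S} = G.degree v + 1 := by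
    rw [Fintype.card_coe, hScard]
  set cnt : (V ≃ Fin n) → ℕ :=
    fun σ => if ((G.neighborFinset v).filter (fun w => σ w < σ v)).card ≤ 2 then 1 else 0
    with hcnt
  have hA : (Finset.univ.filter (fun σ : V ≃ Fin n =>
      ((G.neighborFinset v).filter (fun w => σ w < σ v)).card ≤ 2)).card
      = ∑ σ : V ≃ Fin n, cnt σ := (Finset.sum_boole _ _).symm
  -- reindexing: for fixed g, summing over σ ∘ ĝ is the same as summing over σ
  have reidx : ∀ g : Equiv.Perm {x // x ∈ S},
      ∑ σ : V ≃ Fin n, cnt (((Equiv.Perm.ofSubtype g : Equiv.Perm V) : V ≃ V).trans σ)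
      = ∑ σ : V ≃ Fin n, cnt σ := by
    intro g
    have bij : Function.Bijective
        (fun σ : V ≃ Fin n => ((Equiv.Perm.ofSubtype g : Equiv.Perm V) : V ≃ V).trans σ) := by
      refine Equiv.bijective ⟨_,
        fun σ : V ≃ Fin n =>
          (((Equiv.Perm.ofSubtype g)⁻¹ : Equiv.Perm V) : V ≃ V).trans σ, ?_, ?_⟩
      · intro σ; ext x; simp
      · intro σ; ext x; simp
    exact Fintype.sum_bijective _ bij _ _ (fun σ => rfl)
  -- double counting
  have double : (Fintype.card {x // x ∈ S}).factorial * ∑ σ : V ≃ Fin n, cnt σ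
      = Fintype.card (V ≃ Fin n) * (3 * (G.degree v).factorial) := by
    calc (Fintype.card {x // x ∈ S}).factorial * ∑ σ : V ≃ Fin n, cnt σ
        = ∑ _g : Equiv.Perm {x // x ∈ S}, ∑ σ : V ≃ Fin n, cnt σ := by
          rw [Finset.sum_const, Finset.card_univ, Fintype.card_perm, smul_eq_mul]
      _ = ∑ g : Equiv.Perm {x // x ∈ S}, ∑ σ : V ≃ Fin n,
            cnt (((Equiv.Perm.ofSubtype g : Equiv.Perm V) : V ≃ V).trans σ) := by
          exact Finset.sum_congr rfl (fun g _ => (reidx g).symm)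
      _ = ∑ σ : V ≃ Fin n, ∑ g : Equiv.Perm {x // x ∈ S},
            cnt (((Equiv.Perm.ofSubtype g : Equiv.Perm V) : V ≃ V).trans σ) :=
          Finset.sum_comm
      _ = ∑ _σ : V ≃ Fin n, 3 * (G.degree v).factorial := by
          refine Finset.sum_congr rfl (fun σ _ => ?_)
          exact inner_count G v hdeg σ
      _ = Fintype.card (V ≃ Fin n) * (3 * (G.degree v).factorial) := by
          rw [Finset.sum_const, Finset.card_univ, smul_eq_mul]
  rw [hA]
  have hfac : (Fintype.card {x // x ∈ S}).factorial
      = (G.degree v).factorial * (G.degree v + 1) := by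
    rw [hSc, Nat.factorial_succ, Nat.mul_comm]
  rw [hfac] at double
  apply Nat.eq_of_mul_eq_mul_left (Nat.factorial_pos (G.degree v))
  calc (G.degree v).factorial * ((∑ σ : V ≃ Fin n, cnt σ) * (G.degree v + 1))
      = (G.degree v).factorial * (G.degree v + 1) * ∑ σ : V ≃ Fin n, cnt σ := by ring
    _ = Fintype.card (V ≃ Fin n) * (3 * (G.degree v).factorial) := double
    _ = (G.degree v).factorial * (3 * Fintype.card (V ≃ Fin n)) := by ring

end


/-- If every vertex has degree at least 2 and `I` is an independent set, then for a
uniformly random ordering of the vertices, the expected number of vertices of `I`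
having at most two neighbors preceding them (i.e. lying in `G_3`) equals
`∑_{v ∈ I} 3/(d(v)+1)`. -/
theorem expected_I_inter_G3 {V : Type*} [Fintype V] [DecidableEq V]
    (G : SimpleGraph V) [DecidableRel G.Adj]
    (hdeg : ∀ v : V, 2 ≤ G.degree v)
    (I : Finset V) (hI : ∀ u ∈ I, ∀ v ∈ I, ¬ G.Adj u v) :
    (∑ σ : V ≃ Fin (Fintype.card V),
        ((I.filter (fun v => ((G.neighborFinset v).filter (fun w => σ w < σ v)).card ≤ 2)).card : ℝ))
      / (Fintype.card (V ≃ Fin (Fintype.card V)) : ℝ)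
      = ∑ v ∈ I, 3 / ((G.degree v : ℝ) + 1) := by
  classical
  set n := Fintype.card V
  set N : ℕ := Fintype.card (V ≃ Fin n) with hN
  have hNpos : 0 < N := by
    rw [hN, Fintype.card_equiv (Fintype.equivFin V)]
    exact Nat.factorial_pos _
  have hNne : (N : ℝ) ≠ 0 := Nat.cast_ne_zero.mpr hNpos.ne'
  have step1 : ∀ σ : V ≃ Fin n,
      ((I.filter (fun v => ((G.neighborFinset v).filter (fun w => σ w < σ v)).card ≤ 2)).card : ℝ)
      = ∑ v ∈ I, (if ((G.neighborFinset v).filter (fun w => σ w < σ v)).card ≤ 2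
          then (1 : ℝ) else 0) := by
    intro σ
    rw [Finset.sum_boole]
  rw [Finset.sum_congr rfl (fun σ _ => step1 σ), Finset.sum_comm]
  rw [Finset.sum_div]
  refine Finset.sum_congr rfl (fun v _ => ?_)
  have hswap : ∑ σ : V ≃ Fin n,
      (if ((G.neighborFinset v).filter (fun w => σ w < σ v)).card ≤ 2 then (1 : ℝ) else 0)
      = ((Finset.univ.filter (fun σ : V ≃ Fin n =>
          ((G.neighborFinset v).filter (fun w => σ w < σ v)).card ≤ 2)).card : ℝ) :=
    Finset.sum_boole _ _
  rw [hswap]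
  have key := vertex_count G v (hdeg v)
  have keyR : ((Finset.univ.filter (fun σ : V ≃ Fin n =>
      ((G.neighborFinset v).filter (fun w => σ w < σ v)).card ≤ 2)).card : ℝ)
      * ((G.degree v : ℝ) + 1) = 3 * (N : ℝ) := by
    have := congrArg (fun k : ℕ => (k : ℝ)) key
    push_cast at this
    convert this using 2 <;> norm_num
  have hdne : ((G.degree v : ℝ) + 1) ≠ 0 := by positivity
  field_simp
  linarith [keyR]
end

section
/- Let G be a finite simple graph, u a vertex of degree 2 with neighbors v and w that are adjacent to each other. Then the maximum independent set size of G equals 1 plus the maximum independent set size of G with u, v, w deleted. -/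
open Finset

/-- The maximum size of an independent set of `G`. -/
noncomputable def indepNum {V : Type*} [Fintype V] (G : SimpleGraph V) : ℕ :=
  sSup {n | ∃ s : Finset V, (∀ u ∈ s, ∀ w ∈ s, ¬ G.Adj u w) ∧ s.card = n}

/-- The maximum size of an independent set of `G` contained in the set `A`
(i.e. of the subgraph of `G` induced on `A`). -/
noncomputable def indepNumOn {V : Type*} [Fintype V] (G : SimpleGraph V) (A : Set V) : ℕ :=
  sSup {n | ∃ s : Finset V, ↑s ⊆ A ∧ (∀ u ∈ s, ∀ w ∈ s, ¬ G.Adj u w) ∧ s.card = n}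

/-- If `u` has degree 2 with neighbors `v, w` that are adjacent to each other, then
`α(G) = 1 + α(G - {u,v,w})`. -/
theorem degree_two_triangle_elimination {V : Type*} [Fintype V] [DecidableEq V]
    (G : SimpleGraph V) (u v w : V) (hvw : v ≠ w)
    (hN : G.neighborSet u = {v, w}) (hadj : G.Adj v w) :
    indepNum G = 1 + indepNumOn G ({u, v, w}ᶜ : Set V) := by
  classical
  have huv : G.Adj u v := by
    have : v ∈ G.neighborSet u := by rw [hN]; exact Set.mem_insert _ _
    exact this
  have huw : G.Adj u w := by
    have : w ∈ G.neighborSet u := by rw [hN]; exact Set.mem_insert_of_mem _ rfl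
    exact this
  set S1 : Set ℕ := {n | ∃ s : Finset V, (∀ a ∈ s, ∀ b ∈ s, ¬ G.Adj a b) ∧ s.card = n}
  set A : Set V := ({u, v, w}ᶜ : Set V)
  set S2 : Set ℕ := {n | ∃ s : Finset V, ↑s ⊆ A ∧ (∀ a ∈ s, ∀ b ∈ s, ¬ G.Adj a b) ∧ s.card = n}
  have hb1 : BddAbove S1 := by
    refine ⟨Fintype.card V, ?_⟩
    rintro n ⟨s, _, rfl⟩
    exact Finset.card_le_card (Finset.subset_univ s) |>.trans_eq (Finset.card_univ)
  have hb2 : BddAbove S2 := by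
    refine ⟨Fintype.card V, ?_⟩
    rintro n ⟨s, _, _, rfl⟩
    exact Finset.card_le_card (Finset.subset_univ s) |>.trans_eq (Finset.card_univ)
  have hne1 : S1.Nonempty := ⟨0, ∅, by simp⟩
  have hne2 : S2.Nonempty := ⟨0, ∅, by simp⟩
  have h1 : indepNum G ∈ S1 := Nat.sSup_mem hne1 hb1
  have h2 : indepNumOn G A ∈ S2 := Nat.sSup_mem hne2 hb2
  obtain ⟨s, hs, hscard⟩ := h1
  obtain ⟨t, htA, ht, htcard⟩ := h2
  apply le_antisymm
  · -- indepNum G ≤ 1 + indepNumOn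
    have hsub : ((s \ {u, v, w} : Finset V) : Set V) ⊆ A := by
      intro x hx
      simp only [Finset.coe_sdiff, Set.mem_diff, Finset.coe_insert, Finset.coe_singleton] at hx
      simpa [A] using hx.2
    have hindep : ∀ a ∈ s \ ({u, v, w} : Finset V), ∀ b ∈ s \ ({u, v, w} : Finset V),
        ¬ G.Adj a b := fun a ha b hb =>
      hs a (Finset.mem_sdiff.mp ha).1 b (Finset.mem_sdiff.mp hb).1
    have hmem : (s \ ({u, v, w} : Finset V)).card ∈ S2 := ⟨_, hsub, hindep, rfl⟩
    have hle : (s \ ({u, v, w} : Finset V)).card ≤ indepNumOn G A := le_csSup hb2 hmem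
    -- card of intersection ≤ 1
    have hint : (s ∩ ({u, v, w} : Finset V)).card ≤ 1 := by
      by_contra h
      push_neg at h
      obtain ⟨a, ha, b, hb, hab⟩ := Finset.one_lt_card.mp h
      obtain ⟨has, ha'⟩ := Finset.mem_inter.mp ha
      obtain ⟨hbs, hb'⟩ := Finset.mem_inter.mp hb
      simp only [Finset.mem_insert, Finset.mem_singleton] at ha' hb'
      have hadjab : G.Adj a b := by
        rcases ha' with rfl | rfl | rfl <;> rcases hb' with rfl | rfl | rfl <;>
          first
          | exact absurd rfl hab
          | assumption
          | exact huv.symm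
          | exact huw.symm
          | exact hadj.symm
      exact hs a has b hbs hadjab
    have hcard : s.card ≤ (s \ ({u, v, w} : Finset V)).card + 1 := by
      have := Finset.card_sdiff_add_card_inter s ({u, v, w} : Finset V)
      omega
    omega
  · -- 1 + indepNumOn ≤ indepNum G
    have hu : u ∉ t := by
      intro hu
      have := htA hu
      simp [A] at this
    have hindep : ∀ a ∈ insert u t, ∀ b ∈ insert u t, ¬ G.Adj a b := by
      intro a ha b hb
      have key : ∀ x ∈ t, ¬ G.Adj u x := by
        intro x hx hax
        have : x ∈ G.neighborSet u := hax
        rw [hN] at this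
        have := htA hx
        simp only [A, Set.mem_compl_iff, Set.mem_insert_iff, Set.mem_singleton_iff] at this
        rcases ‹x ∈ ({v, w} : Set V)› with rfl | rfl
        · exact this (Or.inr (Or.inl rfl))
        · exact this (Or.inr (Or.inr rfl))
      rcases Finset.mem_insert.mp ha with rfl | ha'
      · rcases Finset.mem_insert.mp hb with rfl | hb'
        · exact fun h => G.irrefl h
        · exact key b hb'
      · rcases Finset.mem_insert.mp hb with rfl | hb'
        · exact fun h => key a ha' h.symm
        · exact ht a ha' b hb'
    have hmem : (insert u t).card ∈ S1 := ⟨_, hindep, rfl⟩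
    have hle : (insert u t).card ≤ indepNum G := le_csSup hb1 hmem
    rw [Finset.card_insert_of_notMem hu] at hle
    omega
end

section
/- Let G be a finite simple graph, u a vertex of degree 2 with non-adjacent neighbors v and w. Let G' be the graph obtained by deleting u and merging v and w into a single new vertex adjacent to all former neighbors of v and of w (other than u). Then the maximum independent set size of G equals 1 plus the maximum independent set size of G'. -/
open Finset

/-- The graph obtained from `G` by 2-elimination at a degree-2 vertex `u` with
non-adjacent neighbors `v` and `w`: delete `u` and merge `v` and `w` into a single
vertex (represented by `v`), adjacent to all former neighbors of `v` and of `w`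
other than `u`, `v`, `w`. -/
def twoElim {V : Type*} (G : SimpleGraph V) (u v w : V) :
    SimpleGraph {x : V // x ≠ u ∧ x ≠ w} where
  Adj a b :=
    ((a : V) ≠ v ∧ (b : V) ≠ v ∧ G.Adj a b) ∨
    ((a : V) = v ∧ (b : V) ≠ v ∧ (G.Adj v b ∨ G.Adj w b)) ∨
    ((b : V) = v ∧ (a : V) ≠ v ∧ (G.Adj v a ∨ G.Adj w a))
  symm := by
    constructor
    rintro a b (⟨h1, h2, h3⟩ | ⟨h1, h2, h3⟩ | ⟨h1, h2, h3⟩)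
    · exact Or.inl ⟨h2, h1, h3.symm⟩
    · exact Or.inr (Or.inr ⟨h1, h2, h3⟩)
    · exact Or.inr (Or.inl ⟨h1, h2, h3⟩)
  loopless := by
    constructor
    rintro a (⟨h1, h2, h3⟩ | ⟨h1, h2, h3⟩ | ⟨h1, h2, h3⟩)
    · exact G.irrefl h3
    · exact h2 h1
    · exact h2 h1

/-
Independent sets transfer in both directions, losing exactly one vertex. An independent set `S'`
of `G'` lifts to `G` with the merged vertex read as `v`; it then extends by `w` if `v ∈ S'`
(the merged vertex being non-adjacent to `S'` covers the neighbours of `w`), and by `u` otherwise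
(both neighbours of `u` are then absent). Conversely, an independent set `S` of `G` with `v, w ∈ S`
restricts to `G'` by dropping only `w` (as `u ∉ S`); otherwise `S` meets `{u, v, w}` in at most one
vertex and `S \ {u, v, w}` is independent in `G'`.
-/

namespace SimpleGraph

variable {V : Type*} {G : SimpleGraph V}

lemma IsIndepSet.card_add_one_le_indepNum [Finite V] [DecidableEq V] {s : Finset V} {a : V}
    (hs : G.IsIndepSet s) (ha : a ∉ s) (has : ∀ b ∈ s, ¬G.Adj a b) : #s + 1 ≤ G.indepNum := by
  rw [← Finset.card_insert_of_notMem ha]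
  apply IsIndepSet.card_le_indepNum
  rw [Finset.coe_insert]
  exact hs.insert fun b hb _ => ⟨has b hb, fun h => has b hb h.symm⟩

end SimpleGraph

lemma indepNum_eq_simpleGraph_indepNum {V : Type*} [Fintype V] (G : SimpleGraph V) :
    indepNum G = G.indepNum := by
  unfold indepNum SimpleGraph.indepNum
  congr! with n s
  rw [SimpleGraph.isNIndepSet_iff, SimpleGraph.isIndepSet_iff]
  exact and_congr_left' ⟨fun h a ha b hb _ => h a ha b hb, fun h a ha b hb hab =>
    h ha hb (G.ne_of_adj hab) hab⟩

section TwoElim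

variable {V : Type*} {G : SimpleGraph V} {u v w : V}

lemma twoElim_adj_of_adj {a b : {x : V // x ≠ u ∧ x ≠ w}} (h : G.Adj a b) :
    (twoElim G u v w).Adj a b := by
  by_cases ha : (a : V) = v <;> by_cases hb : (b : V) = v
  · exact absurd (ha.trans hb.symm) h.ne
  · exact .inr <| .inl ⟨ha, hb, .inl (ha ▸ h)⟩
  · exact .inr <| .inr ⟨hb, ha, .inl (hb ▸ h.symm)⟩
  · exact .inl ⟨ha, hb, h⟩

lemma isIndepSet_image_val_of_twoElim {s : Set {x : V // x ≠ u ∧ x ≠ w}}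
    (hs : (twoElim G u v w).IsIndepSet s) : G.IsIndepSet (Subtype.val '' s) := by
  rintro _ ⟨a, ha, rfl⟩ _ ⟨b, hb, rfl⟩ hab hadj
  exact hs ha hb (fun h => hab (congrArg _ h)) (twoElim_adj_of_adj hadj)

lemma isIndepSet_twoElim_subtype [DecidableEq V] {S : Finset V} (hS : G.IsIndepSet S)
    (hv : v ∈ S → ∀ b ∈ S, ¬G.Adj w b) :
    (twoElim G u v w).IsIndepSet (S.subtype fun x => x ≠ u ∧ x ≠ w) := by
  intro a ha b hb hab hadj
  rw [Finset.mem_coe, Finset.mem_subtype] at ha hb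
  rcases hadj with ⟨-, -, h⟩ | ⟨rfl, -, h | h⟩ | ⟨rfl, -, h | h⟩
  · exact hS ha hb (fun h => hab (Subtype.ext h)) h
  · exact hS ha hb (fun h => hab (Subtype.ext h)) h
  · exact hv ha b hb h
  · exact hS hb ha (fun h => hab (Subtype.ext h.symm)) h
  · exact hv hb a ha h

lemma card_inter_le_one_of_isIndepSet [DecidableEq V] {S : Finset V} (hS : G.IsIndepSet S)
    (huv : G.Adj u v) (huw : G.Adj u w) (hvw : ¬(v ∈ S ∧ w ∈ S)) : #(S ∩ {u, v, w}) ≤ 1 := by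
  refine Finset.card_le_one.2 fun a ha b hb => ?_
  simp only [Finset.mem_inter, Finset.mem_insert, Finset.mem_singleton] at ha hb
  have hS' : ∀ x ∈ S, ∀ y ∈ S, ¬G.Adj x y := fun x hx y hy h => hS hx hy h.ne h
  grind

lemma one_add_indepNum_twoElim_le [Finite V] (hu : G.neighborSet u ⊆ {v, w})
    (hnadj : ¬G.Adj v w) : 1 + (twoElim G u v w).indepNum ≤ G.indepNum := by
  classical
  obtain ⟨s, hs, hcard⟩ := (twoElim G u v w).exists_isNIndepSet_indepNum
  set T := s.map (Function.Embedding.subtype _)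
  have hT : G.IsIndepSet T := by rw [Finset.coe_map]; exact isIndepSet_image_val_of_twoElim hs
  rw [← hcard, ← Finset.card_map (Function.Embedding.subtype _), add_comm]
  by_cases hv : v ∈ T
  · refine hT.card_add_one_le_indepNum (a := w) (by simp) ?_
    simp only [T, Finset.mem_map, Function.Embedding.coe_subtype] at hv ⊢
    obtain ⟨v', hv', rfl⟩ := hv
    rintro _ ⟨b, hb, rfl⟩ hwb
    by_cases hbv : (b : V) = v'
    · exact hnadj (hbv ▸ hwb.symm)
    · exact hs hv' hb (fun h => hbv (congrArg _ h).symm) (.inr <| .inl ⟨rfl, hbv, .inr hwb⟩)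
  · refine hT.card_add_one_le_indepNum (a := u) (by simp) fun b hb hub => ?_
    obtain rfl | rfl := hu hub
    · exact hv hb
    · simp at hb

lemma indepNum_le_one_add_indepNum_twoElim [Finite V] (huv : G.Adj u v) (huw : G.Adj u w) :
    G.indepNum ≤ 1 + (twoElim G u v w).indepNum := by
  classical
  obtain ⟨S, hS, hcard⟩ := G.exists_isNIndepSet_indepNum
  rw [← hcard]
  by_cases hvw : v ∈ S ∧ w ∈ S
  · have hu : u ∉ S := fun hu => hS hu hvw.1 huv.ne huv
    have hT := isIndepSet_twoElim_subtype (u := u) (v := v) hS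
      fun _ b hb hwb => hS hvw.2 hb hwb.ne hwb
    have hcardT : #(S.subtype fun x => x ≠ u ∧ x ≠ w) = #S - 1 := by
      rw [Finset.card_subtype, ← Finset.card_erase_of_mem hvw.2]
      congr 1
      ext x
      simp only [Finset.mem_filter, Finset.mem_erase]
      grind
    have hle := hT.card_le_indepNum
    have hpos := Finset.card_pos.2 ⟨w, hvw.2⟩
    omega
  · set S' := S \ {u, v, w}
    have hT := isIndepSet_twoElim_subtype (u := u) (v := v) (w := w) (S := S')
      (hS.mono (Finset.coe_subset.2 Finset.sdiff_subset)) fun hv => by simp [S'] at hv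
    have hcardT : #(S'.subtype fun x => x ≠ u ∧ x ≠ w) = #S' := by
      rw [Finset.card_subtype, Finset.filter_true_of_mem]
      intro x hx
      simp only [S', Finset.mem_sdiff] at hx
      grind
    have hle := hT.card_le_indepNum
    have hsplit : #S' + #(S ∩ {u, v, w}) = #S := Finset.card_sdiff_add_card_inter S _
    have hinter := card_inter_le_one_of_isIndepSet hS huv huw hvw
    omega

end TwoElim

theorem degree_two_elimination_general {V : Type*} [Fintype V] [DecidableEq V]
    (G : SimpleGraph V) (u v w : V)
    (hN : G.neighborSet u = {v, w}) (hnadj : ¬ G.Adj v w) :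
    indepNum G = 1 + indepNum (twoElim G u v w) := by
  have huv : G.Adj u v := (G.mem_neighborSet u v).1 (hN ▸ Set.mem_insert v {w})
  have huw : G.Adj u w := (G.mem_neighborSet u w).1 (hN ▸ Set.mem_insert_of_mem v rfl)
  rw [indepNum_eq_simpleGraph_indepNum, indepNum_eq_simpleGraph_indepNum]
  exact le_antisymm (indepNum_le_one_add_indepNum_twoElim huv huw)
    (one_add_indepNum_twoElim_le hN.subset hnadj)

/-- 2-elimination: if `u` has degree 2 with non-adjacent neighbors `v` and `w`, then the
maximum independent set size of `G` equals 1 plus that of the graph obtained by deleting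
`u` and merging `v` and `w`. -/
theorem degree_two_elimination {V : Type*} [Fintype V] [DecidableEq V]
    (G : SimpleGraph V) (u v w : V) (hvw : v ≠ w)
    (hN : G.neighborSet u = {v, w}) (hnadj : ¬ G.Adj v w) :
    indepNum G = 1 + indepNum (twoElim G u v w) :=
  degree_two_elimination_general G u v w hN hnadj
end

section
/- Let G be a finite simple graph, π a permutation of its vertices, L_i the set of vertices with exactly i−1 neighbors preceding them in π, and G_3 the subgraph induced on L_1 ∪ L_2 ∪ L_3. Then the number of edges of G_3 is at most |L_2| + 2|L_3|. -/
open Finset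
open scoped Classical

/-!
Orient every edge towards its later endpoint in the ordering. An edge of `G₃` is then an edge
from some vertex `v` with at most two earlier neighbours to one of those neighbours, so there are
at most `∑ b v` of them, the sum taken over the vertices `v` whose number `b v` of earlier
neighbours is at most two. That sum is `|L₂| + 2|L₃|`.
-/

theorem Finset.sum_filter_le_two_eq {ι : Type*} (s : Finset ι) (b : ι → ℕ) :
    ∑ v ∈ s with b v ≤ 2, b v = #{v ∈ s | b v = 1} + 2 * #{v ∈ s | b v = 2} := by
  rw [card_filter, card_filter, mul_sum, ← sum_add_distrib, sum_filter]
  refine sum_congr rfl fun v _ => ?_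
  split_ifs <;> omega

namespace SimpleGraph

variable {V α : Type*} [Fintype V] [DecidableEq V] (G : SimpleGraph V) [DecidableRel G.Adj]
  [LinearOrder α] (f : V → α)

def earlierNeighborFinset (v : V) : Finset V :=
  {w ∈ G.neighborFinset v | f w < f v}

variable {G f}

theorem mem_image_earlierNeighborFinset_of_mem_edgeFinset (hf : Function.Injective f)
    {e : Sym2 V} (he : e ∈ G.edgeFinset) :
    ∃ v ∈ e, e ∈ (G.earlierNeighborFinset f v).image (s(·, v)) := by
  induction e using Sym2.ind with
  | _ a b =>
    have hab : G.Adj a b := mem_edgeFinset.1 he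
    simp only [earlierNeighborFinset, mem_image, mem_filter, mem_neighborFinset]
    rcases (hf.ne hab.ne).lt_or_gt with hlt | hlt
    · exact ⟨b, Sym2.mem_mk_right a b, a, ⟨hab.symm, hlt⟩, rfl⟩
    · exact ⟨a, Sym2.mem_mk_left a b, b, ⟨hab, hlt⟩, Sym2.eq_swap⟩

theorem card_filter_edgeFinset_le_sum (hf : Function.Injective f) (p : V → Prop)
    [DecidablePred p] :
    #{e ∈ G.edgeFinset | ∀ x ∈ e, p x} ≤ ∑ v with p v, #(G.earlierNeighborFinset f v) := by
  calc #{e ∈ G.edgeFinset | ∀ x ∈ e, p x}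
      ≤ #(({v | p v} : Finset V).biUnion fun v =>
          (G.earlierNeighborFinset f v).image (s(·, v))) := by
        refine card_le_card fun e he => ?_
        obtain ⟨he, hp⟩ := mem_filter.1 he
        obtain ⟨v, hv, hev⟩ := mem_image_earlierNeighborFinset_of_mem_edgeFinset hf he
        exact mem_biUnion.2 ⟨v, mem_filter.2 ⟨mem_univ v, hp v hv⟩, hev⟩
    _ ≤ ∑ v with p v, #((G.earlierNeighborFinset f v).image (s(·, v))) := card_biUnion_le
    _ ≤ ∑ v with p v, #(G.earlierNeighborFinset f v) := sum_le_sum fun _ _ => card_image_le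

end SimpleGraph

/-- For any ordering `σ` of the vertices, letting `L_i` be the set of vertices with
exactly `i-1` neighbors preceding them, the number of edges of the subgraph induced on
`L₁ ∪ L₂ ∪ L₃` is at most `|L₂| + 2|L₃|`. -/
theorem edges_G3_le {V : Type*} [Fintype V] [DecidableEq V]
    (G : SimpleGraph V) [DecidableRel G.Adj] (σ : V ≃ Fin (Fintype.card V)) :
    (G.edgeFinset.filter (fun e => ∀ x ∈ e,
        ((G.neighborFinset x).filter (fun w => σ w < σ x)).card ≤ 2)).card
      ≤ (univ.filter (fun v : V =>
            ((G.neighborFinset v).filter (fun w => σ w < σ v)).card = 1)).card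
        + 2 * (univ.filter (fun v : V =>
            ((G.neighborFinset v).filter (fun w => σ w < σ v)).card = 2)).card := by
  have h := G.card_filter_edgeFinset_le_sum σ.injective
    (fun x => #(G.earlierNeighborFinset σ x) ≤ 2)
  rwa [sum_filter_le_two_eq] at h
end
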